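/- Let D be a strongly connected digraph belonging to the class 𝒟. Then every alternating cycle chain in D (with respect to any maximum matching) has length at most three. -/
import Mathlib


open Matrix

/-- Adjacency in a digraph given by relation `G`: a 2-cycle between distinct `i` and `j`. -/
def Adjd {n : ℕ} (G : Fin n → Fin n → Prop) (i j : Fin n) : Prop :=
  i ≠ j ∧ G i j ∧ G j i

/-- `G` is a simple symmetric digraph: no loops and edges come in both directions. -/
def IsSSD {n : ℕ} (G : Fin n → Fin n → Prop) : Prop :=
  (∀ i, ¬ G i i) ∧ ∀ i j, G i j → G j i

/-- A vertex is pendant if it is incident to exactly one 2-cycle. -/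
def Pendant {n : ℕ} (G : Fin n → Fin n → Prop) (i : Fin n) : Prop :=
  ∃! j, Adjd G i j

/-- The class 𝒟: simple symmetric digraphs in which every non-pendant vertex is
adjacent to at least one pendant vertex. -/
def InClassD {n : ℕ} (G : Fin n → Fin n → Prop) : Prop :=
  IsSSD G ∧ ∀ i, ¬ Pendant G i → ∃ j, Adjd G i j ∧ Pendant G j

/-- Strong connectivity: a directed path from every vertex to every other vertex. -/
def StronglyConnected {n : ℕ} (G : Fin n → Fin n → Prop) : Prop :=
  ∀ i j : Fin n, Relation.ReflTransGen G i j

/-- An unordered pair `e` is a 2-cycle of `G`. -/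
def IsEdge {n : ℕ} (G : Fin n → Fin n → Prop) (e : Sym2 (Fin n)) : Prop :=
  ∃ i j, e = s(i, j) ∧ Adjd G i j

/-- A matching: a set of pairwise vertex-disjoint 2-cycles. -/
def IsMatching {n : ℕ} (G : Fin n → Fin n → Prop) (M : Finset (Sym2 (Fin n))) : Prop :=
  (∀ e ∈ M, IsEdge G e) ∧
  ∀ e ∈ M, ∀ f ∈ M, e ≠ f → ∀ v : Fin n, v ∈ e → v ∉ f

/-- A maximum matching: a matching of maximum cardinality. -/
def IsMaxMatching {n : ℕ} (G : Fin n → Fin n → Prop) (M : Finset (Sym2 (Fin n))) : Prop :=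
  IsMatching G M ∧ ∀ M', IsMatching G M' → M'.card ≤ M.card

/-- A cycle chain, recorded by its list of (distinct) vertices `i₁, …, i_{m+1}`. -/
def IsCycleChain {n : ℕ} (G : Fin n → Fin n → Prop) (c : List (Fin n)) : Prop :=
  c.Nodup ∧ 2 ≤ c.length ∧ c.Chain' (Adjd G)

/-- A cycle chain from `i` to `j`. -/
def IsCycleChainBtw {n : ℕ} (G : Fin n → Fin n → Prop) (i j : Fin n) (c : List (Fin n)) : Prop :=
  IsCycleChain G c ∧ c.head? = some i ∧ c.getLast? = some j

/-- The list of 2-cycles of a cycle chain. -/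
def chainEdges {n : ℕ} (c : List (Fin n)) : List (Sym2 (Fin n)) :=
  List.zipWith (fun a b => s(a, b)) c c.tail

/-- The cycle chain `c` is alternating with respect to `M`: its 2-cycles are alternately
in `M` and outside `M`, with the first and last 2-cycle in `M` (so its length is odd). -/
def IsAltChain {n : ℕ} (M : Finset (Sym2 (Fin n))) (c : List (Fin n)) : Prop :=
  Odd (chainEdges c).length ∧
  ∀ k (h : k < (chainEdges c).length), ((chainEdges c).get ⟨k, h⟩ ∈ M ↔ Even k)

/-- The digraph of a square matrix: edge `(i,j)` iff `A i j ≠ 0`. -/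
def DA {n : ℕ} (A : Matrix (Fin n) (Fin n) ℝ) : Fin n → Fin n → Prop :=
  fun i j => A i j ≠ 0

/-- The cycle product `a_{ij} a_{ji}` of a 2-cycle. -/
def cycProd {n : ℕ} (A : Matrix (Fin n) (Fin n) ℝ) (e : Sym2 (Fin n)) : ℝ :=
  Sym2.lift ⟨fun i j => A i j * A j i, fun i j => mul_comm _ _⟩ e

/-- The matching product η(M) of a matching `M`. -/
noncomputable def matchProd {n : ℕ} (A : Matrix (Fin n) (Fin n) ℝ)
    (M : Finset (Sym2 (Fin n))) : ℝ :=
  ∏ e ∈ M, cycProd A e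

/-- The (finite) collection of all maximum matchings of `D(A)`. -/
noncomputable def maxMatchings {n : ℕ} (A : Matrix (Fin n) (Fin n) ℝ) :
    Finset (Finset (Sym2 (Fin n))) :=
  {M | IsMaxMatching (DA A) M}.toFinite.toFinset

/-- Δ_A: the sum of the matching products over all maximum matchings of `D(A)`. -/
noncomputable def Delta {n : ℕ} (A : Matrix (Fin n) (Fin n) ℝ) : ℝ :=
  ∑ M ∈ maxMatchings A, matchProd A M

/-- 𝕄(i,j): maximum matchings with respect to which some cycle chain from `i` to `j`
is an alternating cycle chain. -/
def MMset {n : ℕ} (A : Matrix (Fin n) (Fin n) ℝ) (i j : Fin n) :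
    Set (Finset (Sym2 (Fin n))) :=
  {M | IsMaxMatching (DA A) M ∧ ∃ c, IsCycleChainBtw (DA A) i j c ∧ IsAltChain M c}

/-- `i` and `j` are maximally matchable: 𝕄(i,j) ≠ ∅. -/
def MaxMatchable {n : ℕ} (A : Matrix (Fin n) (Fin n) ℝ) (i j : Fin n) : Prop :=
  (MMset A i j).Nonempty

open scoped Classical in
/-- The (unique) alternating cycle chain from `i` to `j`, when it exists. -/
noncomputable def theChain {n : ℕ} (A : Matrix (Fin n) (Fin n) ℝ) (i j : Fin n) :
    List (Fin n) :=
  if h : ∃ c, IsCycleChainBtw (DA A) i j c ∧ ∃ M ∈ MMset A i j, IsAltChain M c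
  then h.choose else []

/-- The path product along a cycle chain: `a_{i₁ i₂} a_{i₂ i₃} ⋯ a_{i_m i_{m+1}}`. -/
def pathProd {n : ℕ} (A : Matrix (Fin n) (Fin n) ℝ) (c : List (Fin n)) : ℝ :=
  (List.zipWith (fun a b => A a b) c c.tail).prod

open scoped Classical in
/-- β_{ij} = (−1)^{(m−1)/2} P_m(i,j) for maximally matchable `i, j`, and `0` otherwise. -/
noncomputable def beta {n : ℕ} (A : Matrix (Fin n) (Fin n) ℝ) (i j : Fin n) : ℝ :=
  if MaxMatchable A i j then
    (-1 : ℝ) ^ (((theChain A i j).length - 2) / 2) * pathProd A (theChain A i j)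
  else 0

/-- β̄_{i,j}(M): product of the cycle products of the 2-cycles of `M` not contained in
the alternating cycle chain from `i` to `j`. -/
noncomputable def betaBar {n : ℕ} (A : Matrix (Fin n) (Fin n) ℝ) (i j : Fin n)
    (M : Finset (Sym2 (Fin n))) : ℝ :=
  ∏ e ∈ M.filter (fun e => e ∉ chainEdges (theChain A i j)), cycProd A e

/-- μ_{ij} = β_{ij} · Σ_{M ∈ 𝕄(i,j)} β̄_{i,j}(M). -/
noncomputable def mu {n : ℕ} (A : Matrix (Fin n) (Fin n) ℝ) (i j : Fin n) : ℝ :=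
  beta A i j * ∑ M ∈ (MMset A i j).toFinite.toFinset, betaBar A i j M

/-- `X` is a group inverse of `A`. -/
def IsGroupInverse {n : ℕ} (A X : Matrix (Fin n) (Fin n) ℝ) : Prop :=
  A * X * A = A ∧ X * A * X = X ∧ A * X = X * A

/-- A tree digraph: strongly connected and all of its cycles have length 2. -/
def IsTreeDigraph {n : ℕ} (G : Fin n → Fin n → Prop) : Prop :=
  StronglyConnected G ∧
  ∀ (a : Fin n) (l : List (Fin n)), (a :: l).Nodup → List.Chain G a l →
    G ((a :: l).getLast (List.cons_ne_nil a l)) a → (a :: l).length = 2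

/-- A star tree digraph: a tree digraph with a center adjacent to every other vertex,
every other vertex being adjacent only to the center. -/
def IsStarTree {n : ℕ} (G : Fin n → Fin n → Prop) : Prop :=
  IsTreeDigraph G ∧
  ∃ c : Fin n, (∀ j, j ≠ c → Adjd G c j) ∧ ∀ i j, Adjd G i j → i = c ∨ j = c

/-- A corona digraph: a simple symmetric digraph in which each non-pendant vertex is
adjacent to exactly one pendant vertex. -/
def IsCorona {n : ℕ} (G : Fin n → Fin n → Prop) : Prop :=
  IsSSD G ∧ ∀ i, ¬ Pendant G i → ∃! j, Adjd G i j ∧ Pendant G j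

/-- 𝕄(i): the maximum matchings in which vertex `i` is matched. -/
noncomputable def MMi {n : ℕ} (A : Matrix (Fin n) (Fin n) ℝ) (i : Fin n) :
    Finset (Finset (Sym2 (Fin n))) :=
  {M | IsMaxMatching (DA A) M ∧ ∃ e ∈ M, i ∈ e}.toFinite.toFinset

lemma adjd_symm {n : ℕ} {G : Fin n → Fin n → Prop} {i j : Fin n}
    (h : Adjd G i j) : Adjd G j i :=
  ⟨h.1.symm, h.2.2, h.2.1⟩

/-- Proposition: in a strongly connected digraph of class `𝒟`, every alternating cycle chain
(with respect to any maximum matching) has length at most three. -/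
theorem alt_chain_length_le_three {n : ℕ} (G : Fin n → Fin n → Prop)
    (hD : InClassD G) (hSC : StronglyConnected G) :
    ∀ (M : Finset (Sym2 (Fin n))) (c : List (Fin n)),
      IsMaxMatching G M → IsCycleChain G c → IsAltChain M c →
        (chainEdges c).length ≤ 3 := by
  classical
  intro M c hM hC hA
  by_contra hlen
  push_neg at hlen
  obtain ⟨⟨hMedge, hMdisj⟩, hMmax⟩ := hM
  obtain ⟨hnd, _, hch⟩ := hC
  obtain ⟨_, halt⟩ := hA
  have hclen : (chainEdges c).length = c.length - 1 := by
    simp [chainEdges, List.length_zipWith, List.length_tail]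
  have h1 : (1:ℕ) < c.length := by omega
  have h2 : (2:ℕ) < c.length := by omega
  have h3 : (3:ℕ) < c.length := by omega
  have h4 : (4:ℕ) < c.length := by omega
  have hch' := List.isChain_iff_getElem.mp hch
  have hau : Adjd G (c.get ⟨1, h1⟩) (c.get ⟨2, h2⟩) := hch' 1 (by omega)
  have huv : Adjd G (c.get ⟨2, h2⟩) (c.get ⟨3, h3⟩) := hch' 2 (by omega)
  have hvb : Adjd G (c.get ⟨3, h3⟩) (c.get ⟨4, h4⟩) := hch' 3 (by omega)
  have hlt2 : 2 < (chainEdges c).length := by omega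
  have hedge2 : (chainEdges c).get ⟨2, hlt2⟩ = s(c.get ⟨2, h2⟩, c.get ⟨3, h3⟩) := by
    simp [chainEdges, List.get_eq_getElem, List.getElem_zipWith, List.getElem_tail]
  have hMuv : s(c.get ⟨2, h2⟩, c.get ⟨3, h3⟩) ∈ M := by
    have := (halt 2 hlt2).mpr (by norm_num)
    rwa [hedge2] at this
  set u := c.get ⟨2, h2⟩ with hu
  set v := c.get ⟨3, h3⟩ with hv
  -- u and v are non-pendant
  have hgetinj : ∀ (i j : Fin c.length), c.get i = c.get j → i = j :=
    fun i j h => (List.Nodup.get_inj_iff hnd).mp h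
  have hnpu : ¬ Pendant G u := by
    rintro ⟨j, _, huniq⟩
    have e1 : c.get ⟨1, h1⟩ = j := huniq _ (adjd_symm hau)
    have e3 : c.get ⟨3, h3⟩ = j := huniq _ huv
    have := hgetinj ⟨1, h1⟩ ⟨3, h3⟩ (e1.trans e3.symm)
    simpa using congrArg Fin.val this
  have hnpv : ¬ Pendant G v := by
    rintro ⟨j, _, huniq⟩
    have e2 : c.get ⟨2, h2⟩ = j := huniq _ (adjd_symm huv)
    have e4 : c.get ⟨4, h4⟩ = j := huniq _ hvb
    have := hgetinj ⟨2, h2⟩ ⟨4, h4⟩ (e2.trans e4.symm)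
    simpa using congrArg Fin.val this
  obtain ⟨p, hup, hp⟩ := hD.2 u hnpu
  obtain ⟨q, hvq, hq⟩ := hD.2 v hnpv
  have hpOnly : ∀ j, Adjd G p j → j = u := fun j hj =>
    hp.unique hj (adjd_symm hup)
  have hqOnly : ∀ j, Adjd G q j → j = v := fun j hj =>
    hq.unique hj (adjd_symm hvq)
  have huvne : u ≠ v := huv.1
  have hpq : p ≠ q := by
    rintro rfl
    exact huvne (hpOnly v (adjd_symm hvq)).symm
  have hpv : p ≠ v := fun h => hnpv (h ▸ hp)
  have hqu : q ≠ u := fun h => hnpu (h ▸ hq)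
  have hpu : p ≠ u := (adjd_symm hup).1
  have hqv : q ≠ v := (adjd_symm hvq).1
  -- u (resp. v) lies only in the edge s(u,v) of M
  have huOnly : ∀ e ∈ M, u ∈ e → e = s(u, v) := by
    intro e he hue
    by_contra hne
    exact hMdisj e he _ hMuv hne u hue (by simp)
  have hvOnly : ∀ e ∈ M, v ∈ e → e = s(u, v) := by
    intro e he hve
    by_contra hne
    exact hMdisj e he _ hMuv hne v hve (by simp)
  -- p and q are unmatched in M
  have hpfree : ∀ e ∈ M, p ∉ e := by
    intro e he hpe
    obtain ⟨x, y, rfl, hxy⟩ := hMedge e he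
    have hkey : s(x, y) = s(p, u) := by
      rcases Sym2.mem_iff.mp hpe with rfl | rfl
      · rw [hpOnly y hxy]
      · rw [hpOnly x (adjd_symm hxy)]
        rw [Sym2.eq_swap]
    rw [hkey] at he
    have := huOnly _ he (by simp)
    rw [Sym2.eq_iff] at this
    rcases this with ⟨h', _⟩ | ⟨h', _⟩
    · exact hpu h'
    · exact hpv h'
  have hqfree : ∀ e ∈ M, q ∉ e := by
    intro e he hqe
    obtain ⟨x, y, rfl, hxy⟩ := hMedge e he
    have hkey : s(x, y) = s(q, v) := by
      rcases Sym2.mem_iff.mp hqe with rfl | rfl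
      · rw [hqOnly y hxy]
      · rw [hqOnly x (adjd_symm hxy)]
        rw [Sym2.eq_swap]
    rw [hkey] at he
    have := hvOnly _ he (by simp)
    rw [Sym2.eq_iff] at this
    rcases this with ⟨h', _⟩ | ⟨h', _⟩
    · exact hqu h'
    · exact hqv h'
  -- build a larger matching
  set M' : Finset (Sym2 (Fin n)) :=
      insert s(p, u) (insert s(q, v) (M.erase s(u, v))) with hM'def
  -- membership facts about erased part
  have herase : ∀ e ∈ M.erase s(u, v), p ∉ e ∧ q ∉ e ∧ u ∉ e ∧ v ∉ e := by
    intro e he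
    obtain ⟨hne, heM⟩ := Finset.mem_erase.mp he
    refine ⟨hpfree e heM, hqfree e heM, ?_, ?_⟩
    · intro hue; exact hne (huOnly e heM hue)
    · intro hve; exact hne (hvOnly e heM hve)
  have hmemPU : ∀ w : Fin n, w ∈ s(p, u) ↔ (w = p ∨ w = u) := by
    intro w; simp [Sym2.mem_iff]
  have hmemQV : ∀ w : Fin n, w ∈ s(q, v) ↔ (w = q ∨ w = v) := by
    intro w; simp [Sym2.mem_iff]
  have hM'match : IsMatching G M' := by
    constructor
    · intro e he
      rcases Finset.mem_insert.mp he with rfl | he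
      · exact ⟨p, u, rfl, adjd_symm hup⟩
      rcases Finset.mem_insert.mp he with rfl | he
      · exact ⟨q, v, rfl, adjd_symm hvq⟩
      · exact hMedge e (Finset.mem_erase.mp he).2
    · intro e he f hf hef w hwe hwf
      have hcase : ∀ x ∈ M', x = s(p, u) ∨ x = s(q, v) ∨ x ∈ M.erase s(u, v) := by
        intro x hx
        rcases Finset.mem_insert.mp hx with h | h
        · exact Or.inl h
        rcases Finset.mem_insert.mp h with h | h
        · exact Or.inr (Or.inl h)
        · exact Or.inr (Or.inr h)
      rcases hcase e he with rfl | rfl | he' <;> clear he <;>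
        rcases hcase f hf with rfl | rfl | hf' <;> clear hf
      · exact hef rfl
      · rcases (hmemPU w).mp hwe with h1 | h1 <;>
          rcases (hmemQV w).mp hwf with h2 | h2
        · exact hpq (h1.symm.trans h2)
        · exact hpv (h1.symm.trans h2)
        · exact hqu (h2.symm.trans h1)
        · exact huvne (h2.symm.trans h1).symm
      · obtain ⟨hfp, hfq, hfu, hfv⟩ := herase f hf'
        rcases (hmemPU w).mp hwe with h1 | h1
        · exact hfp (h1 ▸ hwf)
        · exact hfu (h1 ▸ hwf)
      · rcases (hmemQV w).mp hwe with h1 | h1 <;>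
          rcases (hmemPU w).mp hwf with h2 | h2
        · exact hpq (h2.symm.trans h1)
        · exact hqu (h1.symm.trans h2)
        · exact hpv (h2.symm.trans h1)
        · exact huvne (h1.symm.trans h2).symm
      · exact hef rfl
      · obtain ⟨hfp, hfq, hfu, hfv⟩ := herase f hf'
        rcases (hmemQV w).mp hwe with h1 | h1
        · exact hfq (h1 ▸ hwf)
        · exact hfv (h1 ▸ hwf)
      · obtain ⟨hep, heq, heu, hev⟩ := herase e he'
        rcases (hmemPU w).mp hwf with h2 | h2
        · exact hep (h2 ▸ hwe)
        · exact heu (h2 ▸ hwe)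
      · obtain ⟨hep, heq, heu, hev⟩ := herase e he'
        rcases (hmemQV w).mp hwf with h2 | h2
        · exact heq (h2 ▸ hwe)
        · exact hev (h2 ▸ hwe)
      · exact hMdisj e (Finset.mem_erase.mp he').2 f (Finset.mem_erase.mp hf').2
          hef w hwe hwf
  -- cardinality
  have hqvnotin : s(q, v) ∉ M.erase s(u, v) := by
    intro h
    exact hqfree _ (Finset.mem_erase.mp h).2 (by simp)
  have hpunotin : s(p, u) ∉ insert s(q, v) (M.erase s(u, v)) := by
    intro h
    rcases Finset.mem_insert.mp h with h | h
    · rw [Sym2.eq_iff] at h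
      rcases h with ⟨h', _⟩ | ⟨h', _⟩
      · exact hpq h'
      · exact hpv h'
    · exact hpfree _ (Finset.mem_erase.mp h).2 (by simp)
  have hcard : M'.card = M.card + 1 := by
    rw [hM'def, Finset.card_insert_of_notMem hpunotin,
      Finset.card_insert_of_notMem hqvnotin,
      Finset.card_erase_of_mem hMuv]
    have : 1 ≤ M.card := Finset.card_pos.mpr ⟨_, hMuv⟩
    omega
  have := hMmax M' hM'match
  omega
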